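/- arXiv:1910.00109 — 7 statements merged into one kernel-verified Lean document; each statement's English description precedes it below -/
import Mathlib

section
/- Let U be an Ulam sequence starting with 1, X in G₁. Then U ∩ [1, 2X+1] = {1} ∪ [X, 2X], i.e. U ∩ [(0,1),(2,1)] = {(0,1)} ∪ [(1,0),(2,0)]. -/
/-- Candidates for the next Ulam element beyond `w`: elements `q` that are greater than every
element of `U ∩ (−∞, w)` and can be written as `x + y` with `x ≠ y` both in `U` in exactly
one way. -/
def ulamNext (U : Set (ℤ ×ₗ ℤ)) (w : ℤ ×ₗ ℤ) : Set (ℤ ×ₗ ℤ) :=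
  {q | (∀ x ∈ U, x < w → x < q) ∧
    ∃! p : (ℤ ×ₗ ℤ) × (ℤ ×ₗ ℤ), p.1 < p.2 ∧ p.1 ∈ U ∧ p.2 ∈ U ∧ q = p.1 + p.2}

/-- `U` is an Ulam sequence starting with `u, v` in the lexicographically ordered group
`G₁ = ℤ ×ₗ ℤ` (the pair `(a,b)` representing `aX + b`): (1) `U ∩ (−∞, v] = {u, v}`;
(2) every nonempty `U ∩ [p,q]` has a minimum and a maximum; (3) for `w > v`, `w ∈ U` iff
`w` is the smallest element of `ulamNext U w`. -/
def IsUlamSeq (u v : ℤ ×ₗ ℤ) (U : Set (ℤ ×ₗ ℤ)) : Prop :=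
  U ∩ Set.Iic v = {u, v} ∧
  (∀ p q : ℤ ×ₗ ℤ, p < q → (U ∩ Set.Icc p q).Nonempty →
    (∃ m ∈ U ∩ Set.Icc p q, ∀ x ∈ U ∩ Set.Icc p q, m ≤ x) ∧
    (∃ M ∈ U ∩ Set.Icc p q, ∀ x ∈ U ∩ Set.Icc p q, x ≤ M)) ∧
  (∀ w, v < w → (w ∈ U ↔ w ∈ ulamNext U w ∧ ∀ q ∈ ulamNext U w, w ≤ q))

namespace UlamAux

lemma lex_le {a b c d : ℤ} : toLex (a, b) ≤ toLex (c, d) ↔ a < c ∨ (a = c ∧ b ≤ d) :=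
  Prod.Lex.le_iff

lemma lex_lt {a b c d : ℤ} : toLex (a, b) < toLex (c, d) ↔ a < c ∨ (a = c ∧ b < d) :=
  Prod.Lex.lt_iff

lemma lex_eq {a b c d : ℤ} : toLex (a, b) = (toLex (c, d) : ℤ ×ₗ ℤ) ↔ a = c ∧ b = d := by
  constructor
  · intro h
    exact ⟨congrArg (fun z => (ofLex z).1) h, congrArg (fun z => (ofLex z).2) h⟩
  · rintro ⟨rfl, rfl⟩; rfl

lemma lex_add (a b c d : ℤ) : toLex (a, b) + toLex (c, d) = toLex (a + c, b + d) := rfl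

variable {U : Set (ℤ ×ₗ ℤ)} (hU : IsUlamSeq (toLex (0, 1)) (toLex (1, 0)) U)

include hU

lemma mem_low : ∀ z ∈ U, z ≤ toLex (1, 0) →
    z = toLex ((0 : ℤ), (1 : ℤ)) ∨ z = toLex ((1 : ℤ), (0 : ℤ)) := by
  intro z hz hle
  have h : z ∈ U ∩ Set.Iic (toLex (1, 0)) := ⟨hz, hle⟩
  rw [hU.1] at h
  simpa using h

lemma one_one_mem : toLex ((0 : ℤ), (1 : ℤ)) ∈ U := by
  have h : toLex ((0 : ℤ), (1 : ℤ)) ∈ ({toLex (0, 1), toLex (1, 0)} : Set (ℤ ×ₗ ℤ)) := by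
    simp
  rw [← hU.1] at h
  exact h.1

lemma X_mem : toLex ((1 : ℤ), (0 : ℤ)) ∈ U := by
  have h : toLex ((1 : ℤ), (0 : ℤ)) ∈ ({toLex (0, 1), toLex (1, 0)} : Set (ℤ ×ₗ ℤ)) := by
    simp
  rw [← hU.1] at h
  exact h.1

/-- Representations of `(1,c)` for `c ≥ 1` and of `(2,c)` for `c ≤ 0` are unique. -/
lemma rep_gen {k c : ℤ} (hkc : (k = 1 ∧ 1 ≤ c) ∨ (k = 2 ∧ c ≤ 0)) :
    ∀ p : (ℤ ×ₗ ℤ) × (ℤ ×ₗ ℤ), p.1 < p.2 → p.1 ∈ U → p.2 ∈ U →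
      toLex (k, c) = p.1 + p.2 → p = (toLex (0, 1), toLex (k, c - 1)) := by
  rintro ⟨x, y⟩ hlt hx hy hsum
  obtain ⟨a₁, b₁, rfl⟩ : ∃ a b : ℤ, x = toLex (a, b) := ⟨(ofLex x).1, (ofLex x).2, rfl⟩
  obtain ⟨a₂, b₂, rfl⟩ : ∃ a b : ℤ, y = toLex (a, b) := ⟨(ofLex y).1, (ofLex y).2, rfl⟩
  rw [lex_add, lex_eq] at hsum
  rw [lex_lt] at hlt
  rcases lt_or_ge a₁ 1 with h1 | h1
  · have hx' := mem_low hU _ hx (by rw [lex_le]; left; exact h1)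
    rcases hx' with hx' | hx'
    · rw [lex_eq] at hx'
      simp only [Prod.mk.injEq, lex_eq]
      omega
    · rw [lex_eq] at hx'
      omega
  · rcases hlt with h2 | h2
    · omega
    · -- a₁ = a₂, so 2*a₁ = k; only possible with k = 2, a₁ = a₂ = 1, b₁ < b₂, b₁ + b₂ ≤ 0
      have hb1 : b₁ < 0 := by omega
      have hx' := mem_low hU _ hx (by rw [lex_le]; right; exact ⟨by omega, by omega⟩)
      rcases hx' with hx' | hx' <;> rw [lex_eq] at hx' <;> omega

lemma one_mem : ∀ b : ℤ, 0 ≤ b → toLex ((1 : ℤ), b) ∈ U := by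
  have key : ∀ m : ℕ, toLex ((1 : ℤ), (m : ℤ)) ∈ U := by
    intro m
    induction m with
    | zero => simpa using X_mem hU
    | succ m ih =>
      have hcast : ((m + 1 : ℕ) : ℤ) = (m : ℤ) + 1 := by push_cast; ring
      rw [hcast]
      set n : ℤ := (m : ℤ) with hn
      have hn0 : 0 ≤ n := by positivity
      have hw : toLex ((1 : ℤ), (0 : ℤ)) < toLex ((1 : ℤ), n + 1) := by rw [lex_lt]; omega
      rw [hU.2.2 _ hw]
      refine ⟨⟨fun x _ hx => hx, ⟨(toLex (0, 1), toLex (1, n + 1 - 1)), ?_, ?_⟩⟩, ?_⟩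
      · refine ⟨by rw [lex_lt]; omega, one_one_mem hU, ?_, ?_⟩
        · have h : n + 1 - 1 = n := by ring
          rw [h]; exact ih
        · rw [lex_add, lex_eq]; omega
      · intro p hp
        exact rep_gen hU (Or.inl ⟨rfl, by omega⟩) p hp.1 hp.2.1 hp.2.2.1 hp.2.2.2
      · rintro q ⟨hdom, -⟩
        obtain ⟨qa, qb, rfl⟩ : ∃ a b : ℤ, q = toLex (a, b) := ⟨(ofLex q).1, (ofLex q).2, rfl⟩
        have h2 := hdom (toLex (1, n)) ih (by rw [lex_lt]; omega)
        rw [lex_lt] at h2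
        rw [lex_le]
        omega
  intro b hb
  have h := key b.toNat
  rwa [show ((b.toNat : ℤ)) = b by omega] at h

lemma two_down {c : ℤ} (hc : c ≤ 0) (h : toLex ((2 : ℤ), c) ∈ U) :
    toLex ((2 : ℤ), c - 1) ∈ U := by
  have hw : toLex ((1 : ℤ), (0 : ℤ)) < toLex ((2 : ℤ), c) := by rw [lex_lt]; omega
  obtain ⟨⟨-, p, hp, -⟩, -⟩ := (hU.2.2 _ hw).mp h
  have he := rep_gen hU (Or.inr ⟨rfl, hc⟩) p hp.1 hp.2.1 hp.2.2.1 hp.2.2.2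
  have h2 := hp.2.2.1
  rw [he] at h2
  exact h2

lemma two_up {c : ℤ} (hc : c ≤ -1) (h : toLex ((2 : ℤ), c) ∈ U) :
    toLex ((2 : ℤ), c + 1) ∈ U := by
  have hw : toLex ((1 : ℤ), (0 : ℤ)) < toLex ((2 : ℤ), c + 1) := by rw [lex_lt]; omega
  rw [hU.2.2 _ hw]
  refine ⟨⟨fun x _ hx => hx, ⟨(toLex (0, 1), toLex (2, c + 1 - 1)), ?_, ?_⟩⟩, ?_⟩
  · refine ⟨by rw [lex_lt]; omega, one_one_mem hU, ?_, ?_⟩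
    · have he : c + 1 - 1 = c := by ring
      rw [he]; exact h
    · rw [lex_add, lex_eq]; omega
  · intro p hp
    exact rep_gen hU (Or.inr ⟨rfl, by omega⟩) p hp.1 hp.2.1 hp.2.2.1 hp.2.2.2
  · rintro q ⟨hdom, -⟩
    obtain ⟨qa, qb, rfl⟩ : ∃ a b : ℤ, q = toLex (a, b) := ⟨(ofLex q).1, (ofLex q).2, rfl⟩
    have h2 := hdom (toLex (2, c)) h (by rw [lex_lt]; omega)
    rw [lex_lt] at h2
    rw [lex_le]
    omega

/-- Condition (2) (existence of maxima) forces some `(2,c)` with `c ≤ -1` into `U`. -/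
lemma exists_base : ∃ c : ℤ, c ≤ -1 ∧ toLex ((2 : ℤ), c) ∈ U := by
  have hpq : toLex ((1 : ℤ), (0 : ℤ)) < toLex ((2 : ℤ), (-1 : ℤ)) := by rw [lex_lt]; omega
  have hne : (U ∩ Set.Icc (toLex (1, 0)) (toLex (2, -1))).Nonempty :=
    ⟨toLex (1, 0), X_mem hU, le_refl _, le_of_lt hpq⟩
  obtain ⟨M, ⟨hMU, hM1, hM2⟩, hmax⟩ := (hU.2.1 _ _ hpq hne).2
  obtain ⟨ma, mb, rfl⟩ : ∃ a b : ℤ, M = toLex (a, b) := ⟨(ofLex M).1, (ofLex M).2, rfl⟩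
  rw [lex_le] at hM1 hM2
  by_cases hma : ma = 2
  · exact ⟨mb, by omega, hma ▸ hMU⟩
  · -- then ma = 1 and mb ≥ 0; but (1, mb+1) ∈ U contradicts maximality
    have hma1 : ma = 1 := by omega
    have hmb : 0 ≤ mb := by omega
    have hmem : toLex ((1 : ℤ), mb + 1) ∈ U := one_mem hU _ (by omega)
    have hle := hmax (toLex (1, mb + 1))
      ⟨hmem, by rw [lex_le]; omega, by rw [lex_le]; omega⟩
    rw [lex_le] at hle
    omega

lemma two_mem : ∀ c : ℤ, c ≤ 0 → toLex ((2 : ℤ), c) ∈ U := by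
  obtain ⟨c₀, hc₀, hbase⟩ := exists_base hU
  have hup : ∀ n : ℕ, c₀ + n ≤ 0 → toLex ((2 : ℤ), c₀ + n) ∈ U := by
    intro n
    induction n with
    | zero => intro _; simpa using hbase
    | succ m ih =>
      intro hm
      have h1 : toLex ((2 : ℤ), c₀ + m) ∈ U := ih (by push_cast at hm ⊢; omega)
      have h2 := two_up hU (c := c₀ + m) (by push_cast at hm ⊢; omega) h1
      have he : c₀ + (m : ℤ) + 1 = c₀ + ((m : ℕ) + 1 : ℕ) := by push_cast; ring
      rw [← he]; exact h2
  have hdown : ∀ n : ℕ, toLex ((2 : ℤ), c₀ - n) ∈ U := by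
    intro n
    induction n with
    | zero => simpa using hbase
    | succ m ih =>
      have h2 := two_down hU (c := c₀ - m) (by omega) ih
      have he : c₀ - (m : ℤ) - 1 = c₀ - ((m : ℕ) + 1 : ℕ) := by push_cast; ring
      rw [← he]; exact h2
  intro c hc
  rcases le_total c₀ c with h | h
  · have he : c = c₀ + ((c - c₀).toNat : ℤ) := by omega
    rw [he]; exact hup _ (by omega)
  · have he : c = c₀ - ((c₀ - c).toNat : ℤ) := by omega
    rw [he]; exact hdown _

lemma two_one_not : toLex ((2 : ℤ), (1 : ℤ)) ∉ U := by
  intro h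
  have hw : toLex ((1 : ℤ), (0 : ℤ)) < toLex ((2 : ℤ), (1 : ℤ)) := by rw [lex_lt]; omega
  obtain ⟨⟨-, p, -, huniq⟩, -⟩ := (hU.2.2 _ hw).mp h
  have h1 := huniq (toLex (0, 1), toLex (2, 0))
    ⟨by rw [lex_lt]; omega, one_one_mem hU, two_mem hU 0 le_rfl, by rw [lex_add, lex_eq]; omega⟩
  have h2 := huniq (toLex (1, 0), toLex (1, 1))
    ⟨by rw [lex_lt]; omega, X_mem hU, one_mem hU 1 (by omega), by rw [lex_add, lex_eq]; omega⟩
  have h3 : (toLex ((0 : ℤ), (1 : ℤ)) : ℤ ×ₗ ℤ) = toLex ((1 : ℤ), (0 : ℤ)) :=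
    congrArg Prod.fst (h1.trans h2.symm)
  rw [lex_eq] at h3
  omega

end UlamAux

open UlamAux in
/-- If `U` is an Ulam sequence starting with `1 = (0,1)` and `X = (1,0)` in `ℤ ×ₗ ℤ`, then
`U ∩ [1, 2X+1] = {1} ∪ [X, 2X]`. -/
theorem statement2 (U : Set (ℤ ×ₗ ℤ))
    (hU : IsUlamSeq (toLex (0, 1)) (toLex (1, 0)) U) :
    U ∩ Set.Icc (toLex (0, 1)) (toLex (2, 1)) =
      {toLex ((0 : ℤ), (1 : ℤ))} ∪ Set.Icc (toLex (1, 0)) (toLex (2, 0)) := by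
  ext z
  obtain ⟨a, b, rfl⟩ : ∃ x y : ℤ, z = toLex (x, y) := ⟨(ofLex z).1, (ofLex z).2, rfl⟩
  simp only [Set.mem_inter_iff, Set.mem_Icc, Set.mem_union, Set.mem_singleton_iff,
    lex_le, lex_eq]
  constructor
  · rintro ⟨hz, hlo, hhi⟩
    by_cases ha0 : a ≤ 0
    · -- a = 0, b ≥ 1; z ≤ (1,0) so z ∈ {(0,1),(1,0)}
      have h := mem_low hU _ hz (by rw [lex_le]; omega)
      rcases h with h | h <;> rw [lex_eq] at h
      · left; omega
      · omega
    · by_cases ha1 : a = 1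
      · by_cases hb : 0 ≤ b
        · right; omega
        · have h := mem_low hU _ hz (by rw [lex_le]; omega)
          rcases h with h | h <;> rw [lex_eq] at h <;> omega
      · -- a = 2
        have ha2 : a = 2 := by omega
        by_cases hb : b ≤ 0
        · right; omega
        · -- b = 1, contradiction with (2,1) ∉ U
          have hb1 : b = 1 := by omega
          have he : toLex (a, b) = (toLex ((2 : ℤ), (1 : ℤ)) : ℤ ×ₗ ℤ) := by
            rw [lex_eq]; omega
          rw [he] at hz
          exact absurd hz (two_one_not hU)
  · rintro (heq | ⟨h1, h2⟩)
    · obtain ⟨rfl, rfl⟩ := heq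
      exact ⟨one_one_mem hU, by omega, by omega⟩
    · have hcase : (a = 1 ∧ 0 ≤ b) ∨ (a = 2 ∧ b ≤ 0) := by omega
      rcases hcase with ⟨rfl, hb⟩ | ⟨rfl, hb⟩
      · exact ⟨one_mem hU b hb, by omega, by omega⟩
      · exact ⟨two_mem hU b hb, by omega, by omega⟩
end

section
/- Let I₁ = [p₁, q₁] and I₂ = [p₂, q₂] be nonempty intervals in ℤ ×ₗ ℤ with q₁ < p₂. Then: (i) if I₁ or I₂ is a singleton, every element of [p₁+p₂, q₁+q₂] can be written as u + v with u ∈ I₁ and v ∈ I₂ in exactly one way; (ii) if both I₁ and I₂ contain at least two elements, then p₁+p₂ and q₁+q₂ each have exactly one such representation, while every element of [p₁+p₂+1, q₁+q₂−1] has at least two such representations (where +1 denotes adding (0,1)). -/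
/-- Let `I₁ = [p₁, q₁]`, `I₂ = [p₂, q₂]` be nonempty intervals in `ℤ ×ₗ ℤ` with `q₁ < p₂`.
(i) If `I₁` or `I₂` is a singleton, every element of `[p₁+p₂, q₁+q₂]` is `u + v` with
`u ∈ I₁, v ∈ I₂` in exactly one way. (ii) If both have at least two elements, `p₁+p₂` and
`q₁+q₂` have exactly one such representation, while every element of
`[p₁+p₂+1, q₁+q₂−1]` has at least two. -/
theorem statement6 (p₁ q₁ p₂ q₂ : ℤ ×ₗ ℤ)
    (h₁ : p₁ ≤ q₁) (h₂ : p₂ ≤ q₂) (h : q₁ < p₂) :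
    ((p₁ = q₁ ∨ p₂ = q₂) →
      ∀ x ∈ Set.Icc (p₁ + p₂) (q₁ + q₂),
        ∃! uv : (ℤ ×ₗ ℤ) × (ℤ ×ₗ ℤ),
          uv.1 ∈ Set.Icc p₁ q₁ ∧ uv.2 ∈ Set.Icc p₂ q₂ ∧ x = uv.1 + uv.2) ∧
    ((p₁ < q₁ ∧ p₂ < q₂) →
      (∃! uv : (ℤ ×ₗ ℤ) × (ℤ ×ₗ ℤ),
          uv.1 ∈ Set.Icc p₁ q₁ ∧ uv.2 ∈ Set.Icc p₂ q₂ ∧ p₁ + p₂ = uv.1 + uv.2) ∧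
      (∃! uv : (ℤ ×ₗ ℤ) × (ℤ ×ₗ ℤ),
          uv.1 ∈ Set.Icc p₁ q₁ ∧ uv.2 ∈ Set.Icc p₂ q₂ ∧ q₁ + q₂ = uv.1 + uv.2) ∧
      (∀ x ∈ Set.Icc (p₁ + p₂ + toLex (0, 1)) (q₁ + q₂ - toLex (0, 1)),
        ∃ uv uv' : (ℤ ×ₗ ℤ) × (ℤ ×ₗ ℤ), uv ≠ uv' ∧
          (uv.1 ∈ Set.Icc p₁ q₁ ∧ uv.2 ∈ Set.Icc p₂ q₂ ∧ x = uv.1 + uv.2) ∧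
          (uv'.1 ∈ Set.Icc p₁ q₁ ∧ uv'.2 ∈ Set.Icc p₂ q₂ ∧ x = uv'.1 + uv'.2))) := by
  have hε : (0 : ℤ ×ₗ ℤ) < toLex (0, 1) := by
    have : (0 : ℤ ×ₗ ℤ) = toLex (0, 0) := rfl
    rw [this, Prod.Lex.lt_iff]; simp
  constructor
  · rintro (rfl | rfl) x ⟨hx1, hx2⟩
    · refine ⟨(p₁, x - p₁), ⟨⟨le_refl _, le_refl _⟩,
        ⟨by rw [le_sub_iff_add_le, add_comm]; exact hx1,
         by rw [sub_le_iff_le_add, add_comm]; exact hx2⟩,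
        (add_sub_cancel p₁ x).symm⟩, ?_⟩
      rintro ⟨u, v⟩ ⟨⟨hu1, hu2⟩, _, hx⟩
      have hu : u = p₁ := le_antisymm hu2 hu1
      have hv : v = x - p₁ := by
        rw [hx, hu]; exact (add_sub_cancel_left p₁ v).symm
      exact Prod.ext hu hv
    · refine ⟨(x - p₂, p₂), ⟨⟨le_sub_iff_add_le.2 hx1, sub_le_iff_le_add.2 hx2⟩,
        ⟨le_refl _, le_refl _⟩, (sub_add_cancel x p₂).symm⟩, ?_⟩
      rintro ⟨u, v⟩ ⟨_, ⟨hv1, hv2⟩, hx⟩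
      have hv : v = p₂ := le_antisymm hv2 hv1
      have hu : u = x - p₂ := by
        rw [hx, hv]; exact (add_sub_cancel_right u p₂).symm
      exact Prod.ext hu hv
  · rintro ⟨hp, hq⟩
    refine ⟨⟨(p₁, p₂), ⟨⟨le_refl _, h₁⟩, ⟨le_refl _, h₂⟩, rfl⟩, ?_⟩,
      ⟨(q₁, q₂), ⟨⟨h₁, le_refl _⟩, ⟨h₂, le_refl _⟩, rfl⟩, ?_⟩, ?_⟩
    · rintro ⟨u, v⟩ ⟨⟨hu1, _⟩, ⟨hv1, _⟩, hx⟩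
      have h3 : u + p₂ ≤ p₁ + p₂ := by
        rw [hx]; exact add_le_add_right hv1 u
      have hu : u = p₁ := le_antisymm (le_of_add_le_add_right h3) hu1
      have hv : v = p₂ := by
        rw [hu] at hx; exact (add_left_cancel hx).symm
      exact Prod.ext hu hv
    · rintro ⟨u, v⟩ ⟨⟨_, hu2⟩, ⟨_, hv2⟩, hx⟩
      have h3 : q₁ + q₂ ≤ u + q₂ := by
        rw [hx]; exact add_le_add_right hv2 u
      have hu : u = q₁ := le_antisymm hu2 (le_of_add_le_add_right h3)
      have hv : v = q₂ := by
        rw [hu] at hx; exact (add_left_cancel hx).symm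
      exact Prod.ext hu hv
    · rintro x ⟨hx1, hx2⟩
      have hx1' : p₁ + p₂ < x := lt_of_lt_of_le (lt_add_of_pos_right _ hε) hx1
      have hx2' : x < q₁ + q₂ := lt_of_le_of_lt hx2 (sub_lt_self _ hε)
      set L := max p₁ (x - q₂) with hL
      set U := min q₁ (x - p₂) with hU
      have hLU : L < U :=
        max_lt (lt_min hp (lt_sub_iff_add_lt.2 hx1'))
          (lt_min (sub_lt_iff_lt_add.2 hx2') (sub_lt_sub_left hq x))
      refine ⟨(L, x - L), (U, x - U), ?_,
        ⟨⟨le_max_left _ _, hLU.le.trans (min_le_left _ _)⟩,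
         ⟨le_sub_comm.1 (hLU.le.trans (min_le_right _ _)),
          sub_le_comm.1 (le_max_right _ _)⟩, (add_sub_cancel L x).symm⟩,
        ⟨⟨(le_max_left _ _).trans hLU.le, min_le_left _ _⟩,
         ⟨le_sub_comm.1 (min_le_right _ _),
          sub_le_comm.1 ((le_max_right _ _).trans hLU.le)⟩, (add_sub_cancel U x).symm⟩⟩
      intro hc
      exact absurd (congrArg Prod.fst hc) (ne_of_lt hLU)
end

section
/- Let a, b be integers with a ≥ 1 and a not divisible by 3, and let λ' be a real number. Order ℝ[X] by p ≥ q iff p = q or the leading coefficient of p − q is positive, and let R be the set of all p − s·q with p = aX + b, q = 3X + λ', s ranging over polynomials with integer coefficients (viewed in ℝ[X]), and p − s·q ≥ 0. Then R has a minimum element, and this minimum equals (a − 3⌊a/3⌋)·X + (b − ⌊a/3⌋·λ'). -/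
/-- `p ≥ 0` in the ordering of `ℝ[X]` in which `p > q` iff the leading coefficient of `p − q`
is positive. -/
def PolyNonneg (p : Polynomial ℝ) : Prop := p = 0 ∨ 0 < p.leadingCoeff

/-- The remainder set `R_{p,q}` of `p` modulo `q`: all `p − s·q ≥ 0` where `s` ranges over
integer-coefficient polynomials. -/
def remSet (p q : Polynomial ℝ) : Set (Polynomial ℝ) :=
  {r | (∃ s : Polynomial ℤ, r = p - (s.map (Int.castRingHom ℝ)) * q) ∧ PolyNonneg r}

open Polynomial Filter in
lemma ev_pos (p : Polynomial ℝ) (h : 0 < p.leadingCoeff) :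
    ∀ᶠ x in atTop, 0 < p.eval x := by
  rcases lt_or_ge 0 p.degree with hd | hd
  · exact (p.tendsto_atTop_of_leadingCoeff_nonneg hd h.le).eventually_gt_atTop 0
  · have hp : p = C (p.coeff 0) := p.eq_C_of_degree_le_zero hd
    have hn : p.natDegree = 0 := natDegree_eq_zero_iff_degree_le_zero.2 hd
    have : 0 < p.coeff 0 := by
      rwa [Polynomial.leadingCoeff, hn] at h
    filter_upwards with x
    rw [hp, eval_C]; exact this

open Polynomial Filter in
lemma ev_le_neg_one (t : Polynomial ℤ) (hn : t.leadingCoeff < 0) :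
    ∀ᶠ x : ℝ in atTop, (t.map (Int.castRingHom ℝ)).eval x ≤ -1 := by
  set w := t.map (Int.castRingHom ℝ) with hw
  have hinj : Function.Injective (Int.castRingHom ℝ) := Int.cast_injective
  have hlw : w.leadingCoeff = (t.leadingCoeff : ℝ) := leadingCoeff_map_of_injective hinj t
  rcases lt_or_ge 0 w.degree with hd | hd
  · have : Tendsto (fun x => w.eval x) atTop atBot :=
      w.tendsto_atBot_of_leadingCoeff_nonpos hd
        (by rw [hlw]; exact_mod_cast hn.le)
    exact this.eventually_le_atBot (-1)
  · have hp : w = C (w.coeff 0) := w.eq_C_of_degree_le_zero hd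
    have hn0 : w.natDegree = 0 := natDegree_eq_zero_iff_degree_le_zero.2 hd
    have hc : w.coeff 0 = (t.leadingCoeff : ℝ) := by
      rw [← hn0, ← Polynomial.leadingCoeff, hlw]
    filter_upwards with x
    rw [hp, eval_C, hc]
    have : t.leadingCoeff ≤ -1 := by omega
    exact_mod_cast this

/-- For integers `a ≥ 1` with `3 ∤ a` and any real `λ'`, the remainder set of `aX + b` modulo
`3X + λ'` has a minimum, namely `(a − 3⌊a/3⌋)X + (b − ⌊a/3⌋λ')`. -/
theorem statement9 (a b : ℤ) (ha : 1 ≤ a) (h3 : ¬ (3 : ℤ) ∣ a) (lam : ℝ) :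
    (Polynomial.C ((a - 3 * (a / 3) : ℤ) : ℝ) * Polynomial.X +
        Polynomial.C ((b : ℝ) - ((a / 3 : ℤ) : ℝ) * lam)) ∈
      remSet (Polynomial.C (a : ℝ) * Polynomial.X + Polynomial.C (b : ℝ))
        (Polynomial.C 3 * Polynomial.X + Polynomial.C lam) ∧
    ∀ r ∈ remSet (Polynomial.C (a : ℝ) * Polynomial.X + Polynomial.C (b : ℝ))
        (Polynomial.C 3 * Polynomial.X + Polynomial.C lam),
      PolyNonneg (r - (Polynomial.C ((a - 3 * (a / 3) : ℤ) : ℝ) * Polynomial.X +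
        Polynomial.C ((b : ℝ) - ((a / 3 : ℤ) : ℝ) * lam))) := by
  open Polynomial Filter in
  set c : ℤ := a / 3 with hc
  set ρ : ℤ := a - 3 * c with hρ
  have hρmod : ρ = a % 3 := by rw [hρ, hc]; omega
  have hρ1 : 1 ≤ ρ := by
    have h0 : 0 ≤ a % 3 := Int.emod_nonneg a (by norm_num)
    have hne : a % 3 ≠ 0 := fun h => h3 (Int.dvd_of_emod_eq_zero h)
    omega
  have hρ2 : ρ ≤ 2 := by
    have := Int.emod_lt_of_pos a (show (0:ℤ) < 3 by norm_num)
    omega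
  have hinj : Function.Injective (Int.castRingHom ℝ) := Int.cast_injective
  set p : Polynomial ℝ := C (a : ℝ) * X + C (b : ℝ) with hp
  set q : Polynomial ℝ := C 3 * X + C lam with hq
  set m : Polynomial ℝ := C ((ρ : ℤ) : ℝ) * X + C ((b : ℝ) - ((c : ℤ) : ℝ) * lam) with hm
  have hcast : ((ρ : ℤ) : ℝ) = (a : ℝ) - 3 * ((c : ℤ) : ℝ) := by rw [hρ]; push_cast; ring
  have hkey : m = p - ((Polynomial.C c).map (Int.castRingHom ℝ)) * q := by
    rw [hm, hp, hq, Polynomial.map_C, hcast]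
    simp only [map_sub, map_mul, map_ofNat, eq_intCast, Int.cast_id]
    ring
  have hρR : (0:ℝ) < ((ρ : ℤ) : ℝ) := by exact_mod_cast (by omega : (0:ℤ) < ρ)
  have hmlead : m.leadingCoeff = ((ρ : ℤ) : ℝ) := leadingCoeff_linear hρR.ne'
  have hqlead : q.leadingCoeff = 3 := leadingCoeff_linear (by norm_num)
  have hmem : m ∈ remSet p q := by
    refine ⟨⟨Polynomial.C c, hkey⟩, Or.inr ?_⟩
    rw [hmlead]; exact hρR
  refine ⟨hmem, ?_⟩
  rintro r ⟨⟨s, hs⟩, hr⟩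
  set t : Polynomial ℤ := Polynomial.C c - s with ht
  have hrm : r - m = (t.map (Int.castRingHom ℝ)) * q := by
    rw [hs, hkey, ht, Polynomial.map_sub]; ring
  rcases eq_or_ne t 0 with h0 | h0
  · left; rw [hrm, h0]; simp
  · have hlt : (t.map (Int.castRingHom ℝ)).leadingCoeff = (t.leadingCoeff : ℝ) :=
      leadingCoeff_map_of_injective hinj t
    have hn0 : t.leadingCoeff ≠ 0 := leadingCoeff_ne_zero.2 h0
    rcases lt_or_gt_of_ne hn0 with hneg | hpos
    · -- contradiction with PolyNonneg r
      exfalso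
      have hev_r : ∀ᶠ x in atTop, 0 ≤ r.eval x := by
        rcases hr with h | h
        · filter_upwards with x; rw [h]; simp
        · exact (ev_pos r h).mono fun x hx => hx.le
      have hev_t := ev_le_neg_one t hneg
      have hev_q : ∀ᶠ x in atTop, 0 < q.eval x := ev_pos q (by rw [hqlead]; norm_num)
      -- q - m has positive leading coeff 3 - ρ
      have hqm : q - m = C ((3:ℝ) - ((ρ : ℤ) : ℝ)) * X + C (lam - ((b : ℝ) - ((c : ℤ) : ℝ) * lam)) := by
        rw [hq, hm]; simp only [map_sub]; ring
      have h3ρ : (0:ℝ) < 3 - ((ρ : ℤ) : ℝ) := by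
        have : (ρ:ℝ) < 3 := by exact_mod_cast (by omega : ρ < 3)
        linarith
      have hev_qm : ∀ᶠ x in atTop, 0 < (q - m).eval x := by
        apply ev_pos
        rw [hqm, leadingCoeff_linear h3ρ.ne']
        exact h3ρ
      obtain ⟨x, ⟨⟨hx1, hx2⟩, hx3⟩, hx4⟩ := (((hev_r.and hev_t).and hev_q).and hev_qm).exists
      have hrx : r.eval x = m.eval x + (t.map (Int.castRingHom ℝ)).eval x * q.eval x := by
        have := congrArg (Polynomial.eval x) hrm
        simp only [eval_sub, eval_mul] at this
        linarith
      have h1 : (t.map (Int.castRingHom ℝ)).eval x * q.eval x ≤ -1 * q.eval x :=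
        mul_le_mul_of_nonneg_right hx2 hx3.le
      have h2 : (0:ℝ) < q.eval x - m.eval x := by
        have := hx4; simp only [eval_sub] at this; linarith
      linarith
    · right
      rw [hrm, leadingCoeff_mul, hlt, hqlead]
      have : (0:ℝ) < (t.leadingCoeff : ℝ) := by exact_mod_cast hpos
      positivity
end

section
/- Let λ', σ₁, σ₂ be real numbers with 0 < λ' < 3, λ'/3 ≤ σ₁ < 4, and λ'/3 − 4 < σ₂ ≤ 2λ'/3. Let (a_i), (b_i), (c_i), (d_i) be integer sequences with (a_i, b_i) ≤ (c_i, d_i) lexicographically, c_i ∈ {a_i, a_i + 1}, and (c_i, d_i + 1) < (a_{i+1}, b_{i+1}) lexicographically for all i. Assume: (Rigidity) for every integer n ≥ 4, U(1,n) = ⋃_{i=0}^∞ [a_i·n + b_i, c_i·n + d_i]; and (Statistics) for every ε > 0, for all sufficiently large i, each of the pairs (a_i, b_i) and (c_i, d_i) satisfies: either its first coordinate is ≡ 1 (mod 3) and (second coordinate) − λ'·((first coordinate) − 1)/3 ∈ (λ'/3 − ε, σ₁ + ε), or its first coordinate is ≡ 2 (mod 3) and (second coordinate) − λ'·((first coordinate)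 − 2)/3 ∈ (σ₂ − ε, 2λ'/3 + ε). Then for every integer n ≥ 4, setting λ_n = 3n + λ', for every ε > 0 there exists K such that every u ∈ U(1,n) with u ≥ K satisfies u mod λ_n ∈ (λ_n/3 − ε, 2λ_n/3 + ε). -/
/-- Membership in the classical Ulam sequence `U(a,b)`: the first two elements are `a` and `b`,
and an integer `n > b` belongs to the sequence iff it can be written as a sum of two distinct
earlier members in exactly one way. -/
def UlamMem (a b : ℕ) (n : ℕ) : Prop :=
  Nat.strongRecOn n fun n ih =>
    n = a ∨ n = b ∨ (b < n ∧ ∃! p : ℕ × ℕ,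
      ∃ (h1 : 0 < p.1) (h2 : p.1 < p.2) (h3 : p.1 + p.2 = n),
        ih p.1 (by omega) ∧ ih p.2 (by omega))

/-- The classical Ulam sequence `U(a,b)`, viewed as a subset of `ℤ`. -/
def ulamSetZ (a b : ℕ) : Set ℤ := (fun u : ℕ => (u : ℤ)) '' {n | UlamMem a b n}

/-- The statistics condition on an endpoint `AX + B`: either `A ≡ 1 (mod 3)` and
`B − λ'(A − 1)/3 ∈ (λ'/3 − ε, σ₁ + ε)`, or `A ≡ 2 (mod 3)` and
`B − λ'(A − 2)/3 ∈ (σ₂ − ε, 2λ'/3 + ε)`. -/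
def StatCond (lam σ₁ σ₂ ε : ℝ) (A B : ℤ) : Prop :=
  (A % 3 = 1 ∧ (B : ℝ) - lam * ((A : ℝ) - 1) / 3 ∈ Set.Ioo (lam / 3 - ε) (σ₁ + ε)) ∨
  (A % 3 = 2 ∧ (B : ℝ) - lam * ((A : ℝ) - 2) / 3 ∈ Set.Ioo (σ₂ - ε) (2 * lam / 3 + ε))

/-- Assuming the rigidity conjecture and the statistics conjecture, the Gibbs-like conjecture
holds for every `n ≥ 4`: with `λₙ = 3n + λ'`, for every `ε > 0` all sufficiently large elements
`u` of `U(1,n)` satisfy `u mod λₙ ∈ (λₙ/3 − ε, 2λₙ/3 + ε)`. -/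
theorem statement10 (lam σ₁ σ₂ : ℝ)
    (hlam₀ : 0 < lam) (hlam₃ : lam < 3)
    (hσ₁l : lam / 3 ≤ σ₁) (hσ₁u : σ₁ < 4)
    (hσ₂l : lam / 3 - 4 < σ₂) (hσ₂u : σ₂ ≤ 2 * lam / 3)
    (a b c d : ℕ → ℤ)
    (hle : ∀ i : ℕ, toLex (a i, b i) ≤ toLex (c i, d i))
    (hc : ∀ i : ℕ, c i = a i ∨ c i = a i + 1)
    (hgap : ∀ i : ℕ, toLex (c i, d i + 1) < toLex (a (i + 1), b (i + 1)))
    (hrig : ∀ n : ℕ, 4 ≤ n →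
      ulamSetZ 1 n = ⋃ i : ℕ, Set.Icc (a i * n + b i) (c i * n + d i))
    (hstat : ∀ ε : ℝ, 0 < ε → ∃ I : ℕ, ∀ i : ℕ, I ≤ i →
      StatCond lam σ₁ σ₂ ε (a i) (b i) ∧ StatCond lam σ₁ σ₂ ε (c i) (d i)) :
    ∀ n : ℕ, 4 ≤ n → ∀ ε : ℝ, 0 < ε → ∃ K : ℕ, ∀ u : ℕ, UlamMem 1 n u → K ≤ u →
      (u : ℝ) - (3 * n + lam) * ⌊(u : ℝ) / (3 * n + lam)⌋ ∈
        Set.Ioo ((3 * n + lam) / 3 - ε) (2 * (3 * n + lam) / 3 + ε) := by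
  intro n hn ε hε
  have hn' : (4 : ℝ) ≤ (n : ℝ) := by exact_mod_cast hn
  set L : ℝ := 3 * (n : ℝ) + lam with hL
  have hLpos : 0 < L := by rw [hL]; linarith
  have hL12 : (12 : ℝ) < L := by rw [hL]; linarith
  set ε' : ℝ := min ε 1 with hε'def
  have hε' : 0 < ε' := lt_min hε one_pos
  have hε'ε : ε' ≤ ε := min_le_left _ _
  have hε'1 : ε' ≤ 1 := min_le_right _ _
  obtain ⟨I, hI⟩ := hstat ε' hε'
  refine ⟨(Finset.range I).sup (fun i => (c i * (n : ℤ) + d i + 1).toNat), ?_⟩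
  intro u hu hKu
  have humem : (u : ℤ) ∈ ulamSetZ 1 n := ⟨u, hu, rfl⟩
  rw [hrig n hn] at humem
  obtain ⟨S, ⟨i, rfl⟩, hiS⟩ := humem
  rw [Set.mem_Icc] at hiS
  have hiI : I ≤ i := by
    by_contra h
    push_neg at h
    have h1 : (c i * (n : ℤ) + d i + 1).toNat ≤
        (Finset.range I).sup (fun i => (c i * (n : ℤ) + d i + 1).toNat) :=
      Finset.le_sup (f := fun i => (c i * (n : ℤ) + d i + 1).toNat) (Finset.mem_range.mpr h)
    have h2 := hiS.2
    omega
  obtain ⟨hsA, hsC⟩ := hI i hiI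
  have hlo : (a i : ℝ) * n + b i ≤ (u : ℝ) := by exact_mod_cast hiS.1
  have hhi : (u : ℝ) ≤ (c i : ℝ) * n + d i := by exact_mod_cast hiS.2
  have hL3 : L / 3 = (n : ℝ) + lam / 3 := by rw [hL]; ring
  have hL23 : 2 * L / 3 = 2 * (n : ℝ) + 2 * lam / 3 := by rw [hL]; ring
  obtain ⟨k, hk1, hk2⟩ : ∃ k : ℤ, L / 3 - ε' < ((a i : ℝ) * n + b i) - k * L ∧
      ((c i : ℝ) * n + d i) - k * L < 2 * L / 3 + ε' := by
    rcases hsA with ⟨hA, hBlo, hBhi⟩ | ⟨hA, hBlo, hBhi⟩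
    · -- a i % 3 = 1
      refine ⟨(a i - 1) / 3, ?_, ?_⟩
      · have hA3 : a i = 3 * ((a i - 1) / 3) + 1 := by omega
        have hAr : (a i : ℝ) = 3 * (((a i - 1) / 3 : ℤ) : ℝ) + 1 := by exact_mod_cast hA3
        have heq : ((a i : ℝ) * n + b i) - ((a i - 1) / 3 : ℤ) * L
            = (n : ℝ) + ((b i : ℝ) - lam * ((a i : ℝ) - 1) / 3) := by
          rw [hL]; rw [hAr]; ring
        rw [heq, hL3]; linarith
      · rcases hsC with ⟨hC, hDlo, hDhi⟩ | ⟨hC, hDlo, hDhi⟩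
        · -- c i % 3 = 1, so c i = a i
          have hca : c i = a i := by rcases hc i with h | h <;> omega
          have hC3 : c i = 3 * ((a i - 1) / 3) + 1 := by omega
          have hCr : (c i : ℝ) = 3 * (((a i - 1) / 3 : ℤ) : ℝ) + 1 := by exact_mod_cast hC3
          have heq : ((c i : ℝ) * n + d i) - ((a i - 1) / 3 : ℤ) * L
              = (n : ℝ) + ((d i : ℝ) - lam * ((c i : ℝ) - 1) / 3) := by
            rw [hL]; rw [hCr]; ring
          rw [heq, hL23]; linarith
        · -- c i % 3 = 2, so c i = a i + 1
          have hca : c i = a i + 1 := by rcases hc i with h | h <;> omega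
          have hC3 : c i = 3 * ((a i - 1) / 3) + 2 := by omega
          have hCr : (c i : ℝ) = 3 * (((a i - 1) / 3 : ℤ) : ℝ) + 2 := by exact_mod_cast hC3
          have heq : ((c i : ℝ) * n + d i) - ((a i - 1) / 3 : ℤ) * L
              = 2 * (n : ℝ) + ((d i : ℝ) - lam * ((c i : ℝ) - 2) / 3) := by
            rw [hL]; rw [hCr]; ring
          rw [heq, hL23]; linarith
    · -- a i % 3 = 2
      refine ⟨(a i - 2) / 3, ?_, ?_⟩
      · have hA3 : a i = 3 * ((a i - 2) / 3) + 2 := by omega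
        have hAr : (a i : ℝ) = 3 * (((a i - 2) / 3 : ℤ) : ℝ) + 2 := by exact_mod_cast hA3
        have heq : ((a i : ℝ) * n + b i) - ((a i - 2) / 3 : ℤ) * L
            = 2 * (n : ℝ) + ((b i : ℝ) - lam * ((a i : ℝ) - 2) / 3) := by
          rw [hL]; rw [hAr]; ring
        rw [heq, hL3]; linarith
      · rcases hsC with ⟨hC, hDlo, hDhi⟩ | ⟨hC, hDlo, hDhi⟩
        · exfalso; rcases hc i with h | h <;> omega
        · have hca : c i = a i := by rcases hc i with h | h <;> omega
          have hC3 : c i = 3 * ((a i - 2) / 3) + 2 := by omega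
          have hCr : (c i : ℝ) = 3 * (((a i - 2) / 3 : ℤ) : ℝ) + 2 := by exact_mod_cast hC3
          have heq : ((c i : ℝ) * n + d i) - ((a i - 2) / 3 : ℤ) * L
              = 2 * (n : ℝ) + ((d i : ℝ) - lam * ((c i : ℝ) - 2) / 3) := by
            rw [hL]; rw [hCr]; ring
          rw [heq, hL23]; linarith
  have hu1 : L / 3 - ε' < (u : ℝ) - k * L := by linarith
  have hu2 : (u : ℝ) - k * L < 2 * L / 3 + ε' := by linarith
  have hfloor : ⌊(u : ℝ) / L⌋ = k := by
    rw [Int.floor_eq_iff]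
    constructor
    · rw [le_div_iff₀ hLpos]; nlinarith
    · rw [div_lt_iff₀ hLpos]; push_cast; nlinarith
  rw [hfloor]
  constructor
  · linarith
  · linarith
end

section
/- Let U be an Ulam sequence starting with 1, X in G₁. Then there is no p ∈ G₁ with p > X such that the entire interval [p, p + X] is contained in U. -/
/-- If `U` is an Ulam sequence starting with `1 = (0,1)`, `X = (1,0)` in `ℤ ×ₗ ℤ`, there is no
`p > X` with the entire interval `[p, p + X]` contained in `U`. -/
theorem statement11 (U : Set (ℤ ×ₗ ℤ))
    (hU : IsUlamSeq (toLex (0, 1)) (toLex (1, 0)) U) :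
    ¬ ∃ p : ℤ ×ₗ ℤ, toLex (1, 0) < p ∧ Set.Icc p (p + toLex (1, 0)) ⊆ U := by
  rintro ⟨p, hp, hsub⟩
  obtain ⟨hIic, -, hmin⟩ := hU
  set u : ℤ ×ₗ ℤ := toLex (0, 1) with hu_def
  set X : ℤ ×ₗ ℤ := toLex (1, 0) with hX_def
  have huU : u ∈ U := by
    have : u ∈ U ∩ Set.Iic X := by rw [hIic]; exact Set.mem_insert _ _
    exact this.1
  have hvU : X ∈ U := by
    have : X ∈ U ∩ Set.Iic X := by
      rw [hIic]; exact Set.mem_insert_iff.mpr (Or.inr rfl)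
    exact this.1
  have huX : u < X := by
    rw [hu_def, hX_def, Prod.Lex.lt_iff]; norm_num
  have hu0 : (0 : ℤ ×ₗ ℤ) ≤ u := by
    rw [show (0 : ℤ ×ₗ ℤ) = toLex ((0:ℤ), (0:ℤ)) from rfl, hu_def, Prod.Lex.le_iff]
    norm_num
  set q1 : ℤ ×ₗ ℤ := p + X - u with hq1_def
  have hpq1 : p < q1 := by
    rw [hq1_def, add_sub_assoc]
    exact lt_add_of_pos_right p (sub_pos.mpr huX)
  have hq1le : q1 ≤ p + X := sub_le_self _ hu0
  have hpX : p < p + X := lt_add_of_pos_right p (hu0.trans_lt huX)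
  have hpU : p ∈ U := hsub ⟨le_refl p, hpX.le⟩
  have hq1U : q1 ∈ U := hsub ⟨hpq1.le, hq1le⟩
  have hwU : p + X ∈ U := hsub ⟨hpX.le, le_refl _⟩
  have hwv : X < p + X := hp.trans hpX
  obtain ⟨⟨-, r, hr, huniq⟩, -⟩ := (hmin (p + X) hwv).mp hwU
  have hA : ((u, q1) : (ℤ ×ₗ ℤ) × (ℤ ×ₗ ℤ)) = r :=
    huniq (u, q1) ⟨huX.trans (hp.trans hpq1), huU, hq1U, by rw [hq1_def, add_comm u, sub_add_cancel]⟩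
  have hB : ((X, p) : (ℤ ×ₗ ℤ) × (ℤ ×ₗ ℤ)) = r :=
    huniq (X, p) ⟨hp, hvU, hpU, (add_comm p X)⟩
  have : u = X := by
    have := hA.trans hB.symm
    exact congrArg Prod.fst this
  rw [hu_def, hX_def] at this
  have := toLex.injective this
  simp at this
end

section
/- For every integer n ≥ 4, U(1,n) ∩ [1, 5n+1] = {1} ∪ [n, 2n] ∪ {2n+2} ∪ {4n} ∪ [4n+2, 5n−1] ∪ {5n+1}. -/
theorem ulamMem_iff (a b n : ℕ) : UlamMem a b n ↔
    n = a ∨ n = b ∨ (b < n ∧ ∃! p : ℕ × ℕ,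
      ∃ (_ : 0 < p.1) (_ : p.1 < p.2) (_ : p.1 + p.2 = n),
        UlamMem a b p.1 ∧ UlamMem a b p.2) := by
  rw [UlamMem, Nat.strongRecOn_eq]; rfl

/-- The predicted shape of `U(1,n)` up to `5n+1`. -/
def SP (n m : ℕ) : Prop :=
  m = 1 ∨ (n ≤ m ∧ m ≤ 2*n) ∨ m = 2*n+2 ∨ m = 4*n ∨ (4*n+2 ≤ m ∧ m ≤ 5*n-1) ∨ m = 5*n+1

theorem key (n : ℕ) (hn : 4 ≤ n) : ∀ m, m ≤ 5*n+1 → (UlamMem 1 n m ↔ SP n m) := by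
  intro m
  induction m using Nat.strong_induction_on with
  | _ m ih =>
  intro hm
  have mk : ∀ u v : ℕ, 0 < u → u < v → u + v = m → SP n u → SP n v →
      (∀ x y : ℕ, 0 < x → x < y → x + y = m → SP n x → SP n y → x = u ∧ y = v) →
      (∃! p : ℕ × ℕ, ∃ (_ : 0 < p.1) (_ : p.1 < p.2) (_ : p.1 + p.2 = m),
        UlamMem 1 n p.1 ∧ UlamMem 1 n p.2) := by
    intro u v h1 h2 h3 h4 h5 hu
    refine ⟨(u, v), ⟨h1, h2, h3, (ih u (by omega) (by omega)).mpr h4,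
      (ih v (by omega) (by omega)).mpr h5⟩, ?_⟩
    rintro ⟨x, y⟩ ⟨hx1, hx2, hx3, hx4, hx5⟩
    have sx := (ih x (by omega) (by omega)).mp hx4
    have sy := (ih y (by omega) (by omega)).mp hx5
    obtain ⟨e1, e2⟩ := hu x y hx1 hx2 hx3 sx sy
    simp [e1, e2]
  rw [ulamMem_iff]
  constructor
  · rintro (h1 | h1 | ⟨hbm, ⟨⟨x, y⟩, ⟨hx0, hxy, hsum, hux, huy⟩, huniq⟩⟩)
    · unfold SP; omega
    · unfold SP; omega
    · by_contra hsp
      have two : ∀ u1 v1 u2 v2 : ℕ, 0 < u1 → u1 < v1 → u1 + v1 = m → SP n u1 → SP n v1 →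
          0 < u2 → u2 < v2 → u2 + v2 = m → SP n u2 → SP n v2 → u1 ≠ u2 → False := by
        intro u1 v1 u2 v2 h1 h2 h3 h4 h5 h6 h7 h8 h9 h10 hne
        have e1 := huniq (u1, v1) ⟨h1, h2, h3, (ih u1 (by omega) (by omega)).mpr h4,
          (ih v1 (by omega) (by omega)).mpr h5⟩
        have e2 := huniq (u2, v2) ⟨h6, h7, h8, (ih u2 (by omega) (by omega)).mpr h9,
          (ih v2 (by omega) (by omega)).mpr h10⟩
        have : (u1, v1) = (u2, v2) := e1.trans e2.symm
        exact hne (congrArg Prod.fst this)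
      have hgap : m = 2*n+1 ∨ (2*n+3 ≤ m ∧ m ≤ 3*n) ∨ m = 3*n+1 ∨
          (3*n+2 ≤ m ∧ m ≤ 4*n-1) ∨ m = 4*n+1 ∨ m = 5*n := by
        unfold SP at hsp; omega
      rcases hgap with h | h | h | h | h | h
      · exact two 1 (2*n) n (n+1) (by omega) (by omega) (by omega)
          (by unfold SP; omega) (by unfold SP; omega) (by omega) (by omega) (by omega)
          (by unfold SP; omega) (by unfold SP; omega) (by omega)
      · exact two n (m-n) (n+1) (m-n-1) (by omega) (by omega) (by omega)
          (by unfold SP; omega) (by unfold SP; omega) (by omega) (by omega) (by omega)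
          (by unfold SP; omega) (by unfold SP; omega) (by omega)
      · exact two (n+1) (2*n) (n+2) (2*n-1) (by omega) (by omega) (by omega)
          (by unfold SP; omega) (by unfold SP; omega) (by omega) (by omega) (by omega)
          (by unfold SP; omega) (by unfold SP; omega) (by omega)
      · exact two (m-2*n) (2*n) (m-2*n-2) (2*n+2) (by omega) (by omega) (by omega)
          (by unfold SP; omega) (by unfold SP; omega) (by omega) (by omega) (by omega)
          (by unfold SP; omega) (by unfold SP; omega) (by omega)
      · exact two 1 (4*n) (2*n-1) (2*n+2) (by omega) (by omega) (by omega)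
          (by unfold SP; omega) (by unfold SP; omega) (by omega) (by omega) (by omega)
          (by unfold SP; omega) (by unfold SP; omega) (by omega)
      · exact two 1 (5*n-1) n (4*n) (by omega) (by omega) (by omega)
          (by unfold SP; omega) (by unfold SP; omega) (by omega) (by omega) (by omega)
          (by unfold SP; omega) (by unfold SP; omega) (by omega)
  · intro hsp
    have hsp' := hsp
    unfold SP at hsp'
    have hcase : m = 1 ∨ m = n ∨ (n+1 ≤ m ∧ m ≤ 2*n) ∨ m = 2*n+2 ∨ m = 4*n ∨ m = 4*n+2 ∨
        (4*n+3 ≤ m ∧ m ≤ 5*n-1) ∨ m = 5*n+1 := by omega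
    rcases hcase with h | h | h | h | h | h | h | h
    · exact Or.inl h
    · exact Or.inr (Or.inl h)
    · exact Or.inr (Or.inr ⟨by omega, mk 1 (m-1) (by omega) (by omega) (by omega)
        (by unfold SP; omega) (by unfold SP; omega)
        (fun x y hx1 hx2 hx3 sx sy => by unfold SP at sx sy; omega)⟩)
    · exact Or.inr (Or.inr ⟨by omega, mk n (n+2) (by omega) (by omega) (by omega)
        (by unfold SP; omega) (by unfold SP; omega)
        (fun x y hx1 hx2 hx3 sx sy => by unfold SP at sx sy; omega)⟩)
    · exact Or.inr (Or.inr ⟨by omega, mk (2*n-2) (2*n+2) (by omega) (by omega) (by omega)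
        (by unfold SP; omega) (by unfold SP; omega)
        (fun x y hx1 hx2 hx3 sx sy => by unfold SP at sx sy; omega)⟩)
    · exact Or.inr (Or.inr ⟨by omega, mk (2*n) (2*n+2) (by omega) (by omega) (by omega)
        (by unfold SP; omega) (by unfold SP; omega)
        (fun x y hx1 hx2 hx3 sx sy => by unfold SP at sx sy; omega)⟩)
    · exact Or.inr (Or.inr ⟨by omega, mk 1 (m-1) (by omega) (by omega) (by omega)
        (by unfold SP; omega) (by unfold SP; omega)
        (fun x y hx1 hx2 hx3 sx sy => by unfold SP at sx sy; omega)⟩)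
    · exact Or.inr (Or.inr ⟨by omega, mk (n+1) (4*n) (by omega) (by omega) (by omega)
        (by unfold SP; omega) (by unfold SP; omega)
        (fun x y hx1 hx2 hx3 sx sy => by unfold SP at sx sy; omega)⟩)

/-- For every integer `n ≥ 4`,
`U(1,n) ∩ [1, 5n+1] = {1} ∪ [n, 2n] ∪ {2n+2} ∪ {4n} ∪ [4n+2, 5n−1] ∪ {5n+1}`. -/
theorem statement13 (n : ℕ) (hn : 4 ≤ n) :
    ulamSetZ 1 n ∩ Set.Icc 1 (5 * (n : ℤ) + 1) =
      {(1 : ℤ)} ∪ Set.Icc (n : ℤ) (2 * n) ∪ {2 * (n : ℤ) + 2} ∪ {4 * (n : ℤ)} ∪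
        Set.Icc (4 * (n : ℤ) + 2) (5 * n - 1) ∪ {5 * (n : ℤ) + 1} := by
  ext z
  simp only [ulamSetZ, Set.mem_inter_iff, Set.mem_image, Set.mem_setOf_eq, Set.mem_Icc,
    Set.mem_union, Set.mem_singleton_iff]
  constructor
  · rintro ⟨⟨u, hu, rfl⟩, h1, h2⟩
    have hu5 : u ≤ 5*n+1 := by omega
    have := (key n hn u hu5).mp hu
    unfold SP at this
    omega
  · intro h
    have hz1 : 1 ≤ z := by omega
    refine ⟨⟨z.toNat, (key n hn z.toNat (by omega)).mpr (by unfold SP; omega), by omega⟩,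
      by omega, by omega⟩
end

section
/- In ℤ ×ₗ ℤ, U(1,X) ∩ [1, 5X+1] = {1} ∪ [X, 2X] ∪ {2X+2} ∪ {4X} ∪ [4X+2, 5X−1] ∪ {5X+1}, i.e. the first six intervals of U(1,X) are [1,1], [X,2X], [2X+2,2X+2], [4X,4X], [4X+2,5X−1], [5X+1,5X+1]. -/
abbrev e (a b : ℤ) : ℤ ×ₗ ℤ := toLex (a, b)

lemma e_add (a b c d : ℤ) : e a b + e c d = e (a+c) (b+d) := rfl
lemma e_lt {a b c d : ℤ} : e a b < e c d ↔ a < c ∨ (a = c ∧ b < d) := Prod.Lex.lt_iff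
lemma e_le {a b c d : ℤ} : e a b ≤ e c d ↔ a < c ∨ (a = c ∧ b ≤ d) := Prod.Lex.le_iff
lemma e_inj {a b c d : ℤ} : e a b = e c d ↔ a = c ∧ b = d := by
  constructor
  · intro h; have := congrArg ofLex h; simpa [Prod.ext_iff] using this
  · rintro ⟨rfl, rfl⟩; rfl
lemma e_surj (x : ℤ ×ₗ ℤ) : ∃ a b, x = e a b := ⟨(ofLex x).1, (ofLex x).2, rfl⟩

lemma succ_le {a b : ℤ} {q : ℤ ×ₗ ℤ} (h : e a b < q) : e a (b+1) ≤ q := by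
  obtain ⟨c, d, rfl⟩ := e_surj q
  rw [e_lt] at h; rw [e_le]; omega

variable {U : Set (ℤ ×ₗ ℤ)}

section
variable (hU : IsUlamSeq (e 0 1) (e 1 0) U)
include hU

lemma mem_one : e 0 1 ∈ U := by
  have := hU.1
  have h : e 0 1 ∈ U ∩ Set.Iic (e 1 0) := by
    rw [this]; exact Set.mem_insert _ _
  exact h.1

lemma mem_X : e 1 0 ∈ U := by
  have h : e 1 0 ∈ U ∩ Set.Iic (e 1 0) := by
    rw [hU.1]; exact Set.mem_insert_iff.mpr (Or.inr rfl)
  exact h.1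

lemma mem_shape {a b : ℤ} (h : e a b ∈ U) : (a = 0 ∧ b = 1) ∨ (a = 1 ∧ 0 ≤ b) ∨ 2 ≤ a := by
  have key : e a b ≤ e 1 0 → (a = 0 ∧ b = 1) ∨ (a = 1 ∧ b = 0) := by
    intro hle
    have hm : e a b ∈ U ∩ Set.Iic (e 1 0) := ⟨h, hle⟩
    rw [hU.1] at hm
    simp only [Set.mem_insert_iff, Set.mem_singleton_iff] at hm
    rcases hm with h' | h' <;> have := e_inj.mp h'
    · exact Or.inl this
    · exact Or.inr this
  rcases le_or_gt 2 a with h2 | h2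
  · right; right; exact h2
  rcases lt_trichotomy a 1 with h1 | h1 | h1
  · have := key (e_le.mpr (Or.inl h1)); omega
  · rcases le_or_gt 0 b with hb | hb
    · right; left; exact ⟨h1, hb⟩
    · have := key (e_le.mpr (Or.inr ⟨h1, by omega⟩)); omega
  · omega

lemma rep_dest {a b : ℤ} {p : (ℤ ×ₗ ℤ) × (ℤ ×ₗ ℤ)} (hlt : p.1 < p.2) (hp1 : p.1 ∈ U)
    (hp2 : p.2 ∈ U) (hsum : e a b = p.1 + p.2) :
    ∃ x y : ℤ, p.1 = e x y ∧ p.2 = e (a-x) (b-y) ∧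
      ((x = 0 ∧ y = 1) ∨ (x = 1 ∧ 0 ≤ y) ∨ 2 ≤ x) ∧
      ((a-x = 0 ∧ b-y = 1) ∨ (a-x = 1 ∧ 0 ≤ b-y) ∨ 2 ≤ a-x) ∧
      (x < a - x ∨ (2*x = a ∧ 2*y < b)) := by
  obtain ⟨x, y, hx⟩ := e_surj p.1
  obtain ⟨x', y', hx'⟩ := e_surj p.2
  rw [hx, hx', e_add, e_inj] at hsum
  have hx'2 : p.2 = e (a-x) (b-y) := by rw [hx', e_inj]; omega
  refine ⟨x, y, hx, hx'2, mem_shape hU (hx ▸ hp1), mem_shape hU (hx'2 ▸ hp2), ?_⟩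
  rw [hx, hx'2] at hlt
  rw [e_lt] at hlt
  omega

omit hU in
lemma two_reps {a b x1 x2 y1 y2 : ℤ}
    (hx : e x1 x2 ∈ U) (hx' : e (a-x1) (b-x2) ∈ U) (hxlt : e x1 x2 < e (a-x1) (b-x2))
    (hy : e y1 y2 ∈ U) (hy' : e (a-y1) (b-y2) ∈ U) (hylt : e y1 y2 < e (a-y1) (b-y2))
    (hne : x1 ≠ y1 ∨ x2 ≠ y2) :
    ∀ w, e a b ∉ ulamNext U w := by
  intro w hmem
  obtain ⟨-, p, -, hup⟩ := hmem
  have e1 := hup (e x1 x2, e (a-x1) (b-x2)) ⟨hxlt, hx, hx', by rw [e_add, e_inj]; omega⟩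
  have e2 := hup (e y1 y2, e (a-y1) (b-y2)) ⟨hylt, hy, hy', by rw [e_add, e_inj]; omega⟩
  have e3 : e x1 x2 = e y1 y2 := congrArg Prod.fst (e1.trans e2.symm)
  have h1 := e_inj.mp e3
  omega

lemma two_reps_notmem {a b x1 x2 y1 y2 : ℤ}
    (hx : e x1 x2 ∈ U) (hx' : e (a-x1) (b-x2) ∈ U) (hxlt : e x1 x2 < e (a-x1) (b-x2))
    (hy : e y1 y2 ∈ U) (hy' : e (a-y1) (b-y2) ∈ U) (hylt : e y1 y2 < e (a-y1) (b-y2))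
    (hne : x1 ≠ y1 ∨ x2 ≠ y2) (hv : e 1 0 < e a b) :
    e a b ∉ U := by
  intro h
  exact two_reps hx hx' hxlt hy hy' hylt hne (e a b) ((hU.2.2 _ hv).mp h).1

lemma mem_of_min {w : ℤ ×ₗ ℤ} (hv : e 1 0 < w) (h : w ∈ ulamNext U w)
    (hm : ∀ q ∈ ulamNext U w, w ≤ q) : w ∈ U := (hU.2.2 w hv).mpr ⟨h, hm⟩

lemma mem_level1 : ∀ b : ℤ, 0 ≤ b → e 1 b ∈ U := by
  refine Int.le_induction (mem_X hU) ?_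
  intro n hn ih
  refine mem_of_min hU (e_lt.mpr (Or.inr ⟨rfl, by omega⟩)) ⟨fun x hx hxw => hxw, ?_⟩ ?_
  · refine ⟨(e 0 1, e 1 n), ⟨e_lt.mpr (Or.inl one_pos), mem_one hU, ih, by
      rw [e_add, e_inj]; omega⟩, ?_⟩
    rintro p ⟨hlt, hp1, hp2, hsum⟩
    obtain ⟨x, y, h1, h2, C1, C2, C3⟩ := rep_dest hU hlt hp1 hp2 hsum
    have h1' : p.1 = e 0 1 := by rw [h1, e_inj]; omega
    have h2' : p.2 = e 1 n := by rw [h2, e_inj]; omega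
    exact Prod.ext h1' h2'
  · intro q hq
    exact succ_le (hq.1 (e 1 n) ih (e_lt.mpr (Or.inr ⟨rfl, by omega⟩)))

lemma mem1_char {b : ℤ} (h : e 1 b ∈ U) : 0 ≤ b := by
  have := mem_shape hU h; omega

lemma mem0_char {b : ℤ} (h : e 0 b ∈ U) : b = 1 := by
  have := mem_shape hU h; omega

omit hU in
lemma down_up {P : ℤ → Prop} {t : ℤ} (fwd : ∀ c, c ≤ t → P c → P (c-1))
    (bwd : ∀ c, c ≤ t → P (c-1) → P c) {c0 : ℤ} (hc0t : c0 ≤ t) (hc0 : P c0) :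
    ∀ c, c ≤ t → P c := by
  have down : ∀ n : ℕ, P (c0 - n) := by
    intro n; induction n with
    | zero => simpa using hc0
    | succ k ih =>
      have h := fwd (c0 - k) (by omega) ih
      have he : c0 - ((k+1 : ℕ) : ℤ) = (c0 - k) - 1 := by push_cast; ring
      rw [he]; exact h
  have up : ∀ c, c0 ≤ c → c ≤ t → P c := by
    refine Int.le_induction (fun _ => hc0) ?_
    intro n hn ih hnt
    have hPn : P n := ih (by omega)
    refine bwd (n+1) hnt ?_
    rw [show n+1-1 = n from by omega]
    exact hPn
  intro c hc
  rcases le_or_gt c0 c with h | h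
  · exact up c h hc
  · have hd := down (c0 - c).toNat
    rwa [show c0 - ((c0 - c).toNat : ℤ) = c from by omega] at hd

omit hU in
lemma two_reps' {a b x1 x2 x3 x4 y1 y2 y3 y4 : ℤ}
    (hx : e x1 x2 ∈ U) (hx' : e x3 x4 ∈ U) (hy : e y1 y2 ∈ U) (hy' : e y3 y4 ∈ U)
    (hs1 : x1 + x3 = a ∧ x2 + x4 = b) (hs2 : y1 + y3 = a ∧ y2 + y4 = b)
    (hlt1 : x1 < x3 ∨ (x1 = x3 ∧ x2 < x4)) (hlt2 : y1 < y3 ∨ (y1 = y3 ∧ y2 < y4))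
    (hne : x1 ≠ y1 ∨ x2 ≠ y2) : ∀ w, e a b ∉ ulamNext U w := by
  intro w hmem
  obtain ⟨-, p, -, hup⟩ := hmem
  have e1 := hup (e x1 x2, e x3 x4) ⟨e_lt.mpr hlt1, hx, hx', by rw [e_add, e_inj]; omega⟩
  have e2 := hup (e y1 y2, e y3 y4) ⟨e_lt.mpr hlt2, hy, hy', by rw [e_add, e_inj]; omega⟩
  have e3 : e x1 x2 = e y1 y2 := congrArg Prod.fst (e1.trans e2.symm)
  have h1 := e_inj.mp e3
  omega

lemma notmemU {a b : ℤ} (h : ∀ w, e a b ∉ ulamNext U w) (hv : e 1 0 < e a b) :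
    e a b ∉ U := fun hm => h _ ((hU.2.2 _ hv).mp hm).1

lemma lvl2_fwd {c : ℤ} (hc : c ≤ 0) (h : e 2 c ∈ U) : e 2 (c-1) ∈ U := by
  have hv : e 1 0 < e 2 c := e_lt.mpr (Or.inl one_lt_two)
  obtain ⟨⟨-, p, hp, -⟩, -⟩ := (hU.2.2 _ hv).mp h
  obtain ⟨x, y, h1, h2, C1, C2, C3⟩ := rep_dest hU hp.1 hp.2.1 hp.2.2.1 hp.2.2.2
  rcases C1 with ⟨hx, hy⟩ | ⟨hx, hy⟩ | hx
  · have h2' : p.2 = e 2 (c-1) := by rw [h2, e_inj]; omega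
    exact h2' ▸ hp.2.2.1
  · exfalso; omega
  · exfalso; omega

lemma lvl2_bwd {c : ℤ} (hc : c ≤ 0) (h : e 2 (c-1) ∈ U) : e 2 c ∈ U := by
  refine mem_of_min hU (e_lt.mpr (Or.inl one_lt_two)) ⟨fun x hx hxw => hxw, ?_⟩ ?_
  · refine ⟨(e 0 1, e 2 (c-1)), ⟨e_lt.mpr (Or.inl two_pos), mem_one hU, h, by
      rw [e_add, e_inj]; omega⟩, ?_⟩
    rintro p ⟨hlt, hp1, hp2, hsum⟩
    obtain ⟨x, y, h1, h2, C1, C2, C3⟩ := rep_dest hU hlt hp1 hp2 hsum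
    rcases C1 with ⟨hx, hy⟩ | ⟨hx, hy⟩ | hx
    · exact Prod.ext (by rw [h1, e_inj]; omega) (by rw [h2, e_inj]; omega)
    · exfalso; omega
    · exfalso; omega
  · intro q hq
    have h' := succ_le (hq.1 (e 2 (c-1)) h (e_lt.mpr (Or.inr ⟨rfl, by omega⟩)))
    rwa [show c - 1 + 1 = c from by omega] at h'

lemma lvl2_exists : ∃ c0, c0 ≤ 0 ∧ e 2 c0 ∈ U := by
  have hne : (U ∩ Set.Icc (e 1 0) (e 2 0)).Nonempty :=
    ⟨e 1 0, mem_X hU, Set.mem_Icc.mpr ⟨le_refl _, e_le.mpr (Or.inl one_lt_two)⟩⟩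
  obtain ⟨-, M, ⟨hMU, hMI⟩, hMmax⟩ := hU.2.1 (e 1 0) (e 2 0) (e_lt.mpr (Or.inl one_lt_two)) hne
  obtain ⟨m1, m2, rfl⟩ := e_surj M
  rw [Set.mem_Icc] at hMI
  have hl := e_le.mp hMI.1
  have hr := e_le.mp hMI.2
  rcases (by omega : m1 = 1 ∨ m1 = 2) with h1 | h1
  · exfalso
    have hx : e 1 (m2+1) ∈ U := mem_level1 hU _ (by omega)
    have := hMmax (e 1 (m2+1)) ⟨hx, Set.mem_Icc.mpr
      ⟨e_le.mpr (Or.inr ⟨by omega, by omega⟩), e_le.mpr (Or.inl one_lt_two)⟩⟩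
    rw [e_le] at this; omega
  · subst h1; exact ⟨m2, by omega, hMU⟩

lemma mem_level2 : ∀ c : ℤ, c ≤ 0 → e 2 c ∈ U := by
  obtain ⟨c0, hc0t, hc0⟩ := lvl2_exists hU
  exact down_up (fun c hc => lvl2_fwd hU hc) (fun c hc => lvl2_bwd hU hc) hc0t hc0

lemma notmem21 : ∀ w, e 2 1 ∉ ulamNext U w :=
  two_reps' (mem_one hU) (mem_level2 hU 0 le_rfl) (mem_X hU) (mem_level1 hU 1 (by omega))
    ⟨by omega, by omega⟩ ⟨by omega, by omega⟩ (by omega) (by omega) (by omega)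

lemma notmem2c {c : ℤ} (hc : 3 ≤ c) : ∀ w, e 2 c ∉ ulamNext U w :=
  two_reps' (mem_X hU) (mem_level1 hU c (by omega)) (mem_level1 hU 1 (by omega))
    (mem_level1 hU (c-1) (by omega))
    ⟨by omega, by omega⟩ ⟨by omega, by omega⟩ (by omega) (by omega) (by omega)

lemma notmem3 (c : ℤ) : ∀ w, e 3 c ∉ ulamNext U w := by
  rcases le_or_gt c 0 with hc | hc
  · exact two_reps' (mem_X hU) (mem_level2 hU c hc) (mem_level1 hU 1 (by omega))
      (mem_level2 hU (c-1) (by omega))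
      ⟨by omega, by omega⟩ ⟨by omega, by omega⟩ (by omega) (by omega) (by omega)
  · exact two_reps' (mem_level1 hU c (by omega)) (mem_level2 hU 0 le_rfl)
      (mem_level1 hU (c+1) (by omega)) (mem_level2 hU (-1) (by omega))
      ⟨by omega, by omega⟩ ⟨by omega, by omega⟩ (by omega) (by omega) (by omega)

lemma notmem3U (c : ℤ) : e 3 c ∉ U :=
  notmemU hU (notmem3 hU c) (e_lt.mpr (Or.inl (by omega)))

lemma mem22 : e 2 2 ∈ U := by
  refine mem_of_min hU (e_lt.mpr (Or.inl one_lt_two)) ⟨fun x hx hxw => hxw, ?_⟩ ?_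
  · refine ⟨(e 1 0, e 1 2), ⟨e_lt.mpr (Or.inr ⟨rfl, by omega⟩), mem_X hU,
      mem_level1 hU 2 (by omega), by rw [e_add, e_inj]; omega⟩, ?_⟩
    rintro p ⟨hlt, hp1, hp2, hsum⟩
    obtain ⟨x, y, h1, h2, C1, C2, C3⟩ := rep_dest hU hlt hp1 hp2 hsum
    rcases C1 with ⟨hx, hy⟩ | ⟨hx, hy⟩ | hx
    · exfalso
      have h2' : p.2 = e 2 1 := by rw [h2, e_inj]; omega
      exact notmemU hU (notmem21 hU) (e_lt.mpr (Or.inl one_lt_two)) (h2' ▸ hp2)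
    · exact Prod.ext (by rw [h1, e_inj]; omega) (by rw [h2, e_inj]; omega)
    · exfalso; omega
  · intro q hq
    have h0 := succ_le (hq.1 (e 2 0) (mem_level2 hU 0 le_rfl) (e_lt.mpr (Or.inr ⟨rfl, by omega⟩)))
    rcases eq_or_lt_of_le h0 with heq | hlt
    · exfalso; rw [← heq] at hq; exact notmem21 hU _ hq
    · simpa using succ_le hlt

lemma mem2_char {c : ℤ} (h : e 2 c ∈ U) : c ≤ 0 ∨ c = 2 := by
  by_contra hcon
  push_neg at hcon
  rcases (by omega : c = 1 ∨ 3 ≤ c) with h1 | h1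
  · subst h1; exact notmemU hU (notmem21 hU) (e_lt.mpr (Or.inl one_lt_two)) h
  · exact notmemU hU (notmem2c hU h1) (e_lt.mpr (Or.inl one_lt_two)) h

lemma notmem4neg {c : ℤ} (hc : c < 0) : ∀ w, e 4 c ∉ ulamNext U w :=
  two_reps' (mem_level2 hU (c-2) (by omega)) (mem22 hU) (mem_level2 hU c (by omega))
    (mem_level2 hU 0 le_rfl)
    ⟨by omega, by omega⟩ ⟨by omega, by omega⟩ (by omega) (by omega) (by omega)

lemma mem40 : e 4 0 ∈ U := by
  refine mem_of_min hU (e_lt.mpr (Or.inl (by omega))) ⟨fun x hx hxw => hxw, ?_⟩ ?_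
  · refine ⟨(e 2 (-2), e 2 2), ⟨e_lt.mpr (Or.inr ⟨rfl, by omega⟩),
      mem_level2 hU (-2) (by omega), mem22 hU, by rw [e_add, e_inj]; omega⟩, ?_⟩
    rintro p ⟨hlt, hp1, hp2, hsum⟩
    obtain ⟨x, y, h1, h2, C1, C2, C3⟩ := rep_dest hU hlt hp1 hp2 hsum
    rcases C1 with ⟨hx, hy⟩ | ⟨hx, hy⟩ | hx
    · exfalso
      have h2' : p.2 = e 4 (-1) := by rw [h2, e_inj]; omega
      exact notmemU hU (notmem4neg hU (by omega)) (e_lt.mpr (Or.inl (by omega))) (h2' ▸ hp2)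
    · exfalso
      have h2' : p.2 = e 3 (-y) := by rw [h2, e_inj]; omega
      exact notmem3U hU (-y) (h2' ▸ hp2)
    · have hx2 : x = 2 ∧ 2*y < 0 := by omega
      have hm1 : y ≤ 0 ∨ y = 2 := by
        have h1' : p.1 = e 2 y := by rw [h1, e_inj]; omega
        exact mem2_char hU (h1' ▸ hp1)
      have hm2 : -y ≤ 0 ∨ -y = 2 := by
        have h2' : p.2 = e 2 (-y) := by rw [h2, e_inj]; omega
        exact mem2_char hU (h2' ▸ hp2)
      exact Prod.ext (by rw [h1, e_inj]; omega) (by rw [h2, e_inj]; omega)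
  · intro q hq
    by_contra hcon
    push_neg at hcon
    have h22 := hq.1 (e 2 2) (mem22 hU) (e_lt.mpr (Or.inl (by omega)))
    obtain ⟨q1, q2, rfl⟩ := e_surj q
    rw [e_lt] at h22 hcon
    rcases (by omega : (q1 = 2 ∧ 3 ≤ q2) ∨ q1 = 3 ∨ (q1 = 4 ∧ q2 < 0)) with ⟨h1, h2⟩ | h1 | ⟨h1, h2⟩
    · subst h1; exact notmem2c hU h2 _ hq
    · subst h1; exact notmem3 hU q2 _ hq
    · subst h1; exact notmem4neg hU h2 _ hq

lemma notmem41 : ∀ w, e 4 1 ∉ ulamNext U w :=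
  two_reps' (mem_one hU) (mem40 hU) (mem_level2 hU (-1) (by omega)) (mem22 hU)
    ⟨by omega, by omega⟩ ⟨by omega, by omega⟩ (by omega) (by omega) (by omega)

lemma mem42 : e 4 2 ∈ U := by
  refine mem_of_min hU (e_lt.mpr (Or.inl (by omega))) ⟨fun x hx hxw => hxw, ?_⟩ ?_
  · refine ⟨(e 2 0, e 2 2), ⟨e_lt.mpr (Or.inr ⟨rfl, by omega⟩),
      mem_level2 hU 0 le_rfl, mem22 hU, by rw [e_add, e_inj]; omega⟩, ?_⟩
    rintro p ⟨hlt, hp1, hp2, hsum⟩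
    obtain ⟨x, y, h1, h2, C1, C2, C3⟩ := rep_dest hU hlt hp1 hp2 hsum
    rcases C1 with ⟨hx, hy⟩ | ⟨hx, hy⟩ | hx
    · exfalso
      have h2' : p.2 = e 4 1 := by rw [h2, e_inj]; omega
      exact notmemU hU (notmem41 hU) (e_lt.mpr (Or.inl (by omega))) (h2' ▸ hp2)
    · exfalso
      have h2' : p.2 = e 3 (2-y) := by rw [h2, e_inj]; omega
      exact notmem3U hU (2-y) (h2' ▸ hp2)
    · have hx2 : x = 2 := by omega
      have hm1 : y ≤ 0 ∨ y = 2 := by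
        have h1' : p.1 = e 2 y := by rw [h1, e_inj]; omega
        exact mem2_char hU (h1' ▸ hp1)
      have hm2 : 2 - y ≤ 0 ∨ 2 - y = 2 := by
        have h2' : p.2 = e 2 (2-y) := by rw [h2, e_inj]; omega
        exact mem2_char hU (h2' ▸ hp2)
      exact Prod.ext (by rw [h1, e_inj]; omega) (by rw [h2, e_inj]; omega)
  · intro q hq
    have h0 := succ_le (hq.1 (e 4 0) (mem40 hU) (e_lt.mpr (Or.inr ⟨rfl, by omega⟩)))
    rcases eq_or_lt_of_le h0 with heq | hlt
    · exfalso; rw [← heq] at hq; exact notmem41 hU _ hq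
    · simpa using succ_le hlt

lemma mem_level4 : ∀ c : ℤ, 2 ≤ c → e 4 c ∈ U := by
  refine Int.le_induction (mem42 hU) ?_
  intro n hn ih
  refine mem_of_min hU (e_lt.mpr (Or.inl (by omega))) ⟨fun x hx hxw => hxw, ?_⟩ ?_
  · refine ⟨(e 0 1, e 4 n), ⟨e_lt.mpr (Or.inl (by omega)), mem_one hU, ih, by
      rw [e_add, e_inj]; omega⟩, ?_⟩
    rintro p ⟨hlt, hp1, hp2, hsum⟩
    obtain ⟨x, y, h1, h2, C1, C2, C3⟩ := rep_dest hU hlt hp1 hp2 hsum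
    rcases C1 with ⟨hx, hy⟩ | ⟨hx, hy⟩ | hx
    · exact Prod.ext (by rw [h1, e_inj]; omega) (by rw [h2, e_inj]; omega)
    · exfalso
      have h2' : p.2 = e 3 (n+1-y) := by rw [h2, e_inj]; omega
      exact notmem3U hU _ (h2' ▸ hp2)
    · exfalso
      have hx2 : x = 2 := by omega
      have hm1 : y ≤ 0 ∨ y = 2 := by
        have h1' : p.1 = e 2 y := by rw [h1, e_inj]; omega
        exact mem2_char hU (h1' ▸ hp1)
      have hm2 : n + 1 - y ≤ 0 ∨ n + 1 - y = 2 := by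
        have h2' : p.2 = e 2 (n+1-y) := by rw [h2, e_inj]; omega
        exact mem2_char hU (h2' ▸ hp2)
      omega
  · intro q hq
    exact succ_le (hq.1 (e 4 n) ih (e_lt.mpr (Or.inr ⟨rfl, by omega⟩)))

lemma mem4_char {c : ℤ} (h : e 4 c ∈ U) : c = 0 ∨ 2 ≤ c := by
  by_contra hcon
  push_neg at hcon
  rcases (by omega : c < 0 ∨ c = 1) with h1 | h1
  · exact notmemU hU (notmem4neg hU h1) (e_lt.mpr (Or.inl (by omega))) h
  · subst h1; exact notmemU hU (notmem41 hU) (e_lt.mpr (Or.inl (by omega))) h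

lemma lvl5_fwd {c : ℤ} (hc : c ≤ -1) (h : e 5 c ∈ U) : e 5 (c-1) ∈ U := by
  have hv : e 1 0 < e 5 c := e_lt.mpr (Or.inl (by omega))
  obtain ⟨⟨-, p, hp, -⟩, -⟩ := (hU.2.2 _ hv).mp h
  obtain ⟨x, y, h1, h2, C1, C2, C3⟩ := rep_dest hU hp.1 hp.2.1 hp.2.2.1 hp.2.2.2
  rcases C1 with ⟨hx, hy⟩ | ⟨hx, hy⟩ | hx
  · have h2' : p.2 = e 5 (c-1) := by rw [h2, e_inj]; omega
    exact h2' ▸ hp.2.2.1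
  · exfalso
    have h2' : p.2 = e 4 (c-y) := by rw [h2, e_inj]; omega
    have := mem4_char hU (h2' ▸ hp.2.2.1)
    omega
  · exfalso
    have hx2 : x = 2 := by omega
    have h2' : p.2 = e 3 (c-y) := by rw [h2, e_inj]; omega
    exact notmem3U hU _ (h2' ▸ hp.2.2.1)

lemma lvl5_bwd {c : ℤ} (hc : c ≤ -1) (h : e 5 (c-1) ∈ U) : e 5 c ∈ U := by
  refine mem_of_min hU (e_lt.mpr (Or.inl (by omega))) ⟨fun x hx hxw => hxw, ?_⟩ ?_
  · refine ⟨(e 0 1, e 5 (c-1)), ⟨e_lt.mpr (Or.inl (by omega)), mem_one hU, h, by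
      rw [e_add, e_inj]; omega⟩, ?_⟩
    rintro p ⟨hlt, hp1, hp2, hsum⟩
    obtain ⟨x, y, h1, h2, C1, C2, C3⟩ := rep_dest hU hlt hp1 hp2 hsum
    rcases C1 with ⟨hx, hy⟩ | ⟨hx, hy⟩ | hx
    · exact Prod.ext (by rw [h1, e_inj]; omega) (by rw [h2, e_inj]; omega)
    · exfalso
      have h2' : p.2 = e 4 (c-y) := by rw [h2, e_inj]; omega
      have := mem4_char hU (h2' ▸ hp2)
      omega
    · exfalso
      have hx2 : x = 2 := by omega
      have h2' : p.2 = e 3 (c-y) := by rw [h2, e_inj]; omega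
      exact notmem3U hU _ (h2' ▸ hp2)
  · intro q hq
    have h' := succ_le (hq.1 (e 5 (c-1)) h (e_lt.mpr (Or.inr ⟨rfl, by omega⟩)))
    rwa [show c - 1 + 1 = c from by omega] at h'

lemma lvl5_exists : ∃ c0, c0 ≤ -1 ∧ e 5 c0 ∈ U := by
  have hlt : (e 4 2 : ℤ ×ₗ ℤ) < e 5 (-1) := e_lt.mpr (Or.inl (by omega))
  have hne : (U ∩ Set.Icc (e 4 2) (e 5 (-1))).Nonempty :=
    ⟨e 4 2, mem42 hU, Set.mem_Icc.mpr ⟨le_refl _, le_of_lt hlt⟩⟩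
  obtain ⟨-, M, ⟨hMU, hMI⟩, hMmax⟩ := hU.2.1 (e 4 2) (e 5 (-1)) hlt hne
  obtain ⟨m1, m2, rfl⟩ := e_surj M
  rw [Set.mem_Icc] at hMI
  have hl := e_le.mp hMI.1
  have hr := e_le.mp hMI.2
  rcases (by omega : m1 = 4 ∨ m1 = 5) with h1 | h1
  · exfalso
    have hx : e 4 (m2+1) ∈ U := mem_level4 hU _ (by omega)
    have := hMmax (e 4 (m2+1)) ⟨hx, Set.mem_Icc.mpr
      ⟨e_le.mpr (Or.inr ⟨by omega, by omega⟩), e_le.mpr (Or.inl (by omega))⟩⟩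
    rw [e_le] at this; omega
  · subst h1; exact ⟨m2, by omega, hMU⟩

lemma mem_level5 : ∀ c : ℤ, c ≤ -1 → e 5 c ∈ U := by
  obtain ⟨c0, hc0t, hc0⟩ := lvl5_exists hU
  exact down_up (fun c hc => lvl5_fwd hU hc) (fun c hc => lvl5_bwd hU hc) hc0t hc0

lemma notmem50 : ∀ w, e 5 0 ∉ ulamNext U w :=
  two_reps' (mem_one hU) (mem_level5 hU (-1) le_rfl) (mem_X hU) (mem40 hU)
    ⟨by omega, by omega⟩ ⟨by omega, by omega⟩ (by omega) (by omega) (by omega)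

lemma mem51 : e 5 1 ∈ U := by
  refine mem_of_min hU (e_lt.mpr (Or.inl (by omega))) ⟨fun x hx hxw => hxw, ?_⟩ ?_
  · refine ⟨(e 1 1, e 4 0), ⟨e_lt.mpr (Or.inl (by omega)),
      mem_level1 hU 1 (by omega), mem40 hU, by rw [e_add, e_inj]; omega⟩, ?_⟩
    rintro p ⟨hlt, hp1, hp2, hsum⟩
    obtain ⟨x, y, h1, h2, C1, C2, C3⟩ := rep_dest hU hlt hp1 hp2 hsum
    rcases C1 with ⟨hx, hy⟩ | ⟨hx, hy⟩ | hx
    · exfalso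
      have h2' : p.2 = e 5 0 := by rw [h2, e_inj]; omega
      exact notmemU hU (notmem50 hU) (e_lt.mpr (Or.inl (by omega))) (h2' ▸ hp2)
    · have h2' : p.2 = e 4 (1-y) := by rw [h2, e_inj]; omega
      have hm := mem4_char hU (h2' ▸ hp2)
      exact Prod.ext (by rw [h1, e_inj]; omega) (by rw [h2, e_inj]; omega)
    · exfalso
      have hx2 : x = 2 := by omega
      have h2' : p.2 = e 3 (1-y) := by rw [h2, e_inj]; omega
      exact notmem3U hU _ (h2' ▸ hp2)
  · intro q hq
    have h0 := succ_le (hq.1 (e 5 (-1)) (mem_level5 hU (-1) le_rfl)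
      (e_lt.mpr (Or.inr ⟨rfl, by omega⟩)))
    rw [show (-1 : ℤ) + 1 = 0 from by omega] at h0
    rcases eq_or_lt_of_le h0 with heq | hlt
    · exfalso; rw [← heq] at hq; exact notmem50 hU _ hq
    · simpa using succ_le hlt

lemma mem5_char {c : ℤ} (h : e 5 c ∈ U) (hc : c ≤ 1) : c ≤ -1 ∨ c = 1 := by
  by_contra hcon
  push_neg at hcon
  have hc0 : c = 0 := by omega
  subst hc0
  exact notmemU hU (notmem50 hU) (e_lt.mpr (Or.inl (by omega))) h

end


/-- For the unique Ulam sequence `U(1,X)` starting with `1 = (0,1)`, `X = (1,0)` in `ℤ ×ₗ ℤ`: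
`U(1,X) ∩ [1, 5X+1] = {1} ∪ [X, 2X] ∪ {2X+2} ∪ {4X} ∪ [4X+2, 5X−1] ∪ {5X+1}`. -/
theorem statement14 (U : Set (ℤ ×ₗ ℤ))
    (hU : IsUlamSeq (toLex (0, 1)) (toLex (1, 0)) U) :
    U ∩ Set.Icc (toLex (0, 1)) (toLex (5, 1)) =
      {toLex ((0 : ℤ), (1 : ℤ))} ∪ Set.Icc (toLex (1, 0)) (toLex (2, 0)) ∪
        {toLex ((2 : ℤ), (2 : ℤ))} ∪ {toLex ((4 : ℤ), (0 : ℤ))} ∪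
        Set.Icc (toLex (4, 2)) (toLex (5, -1)) ∪ {toLex ((5 : ℤ), (1 : ℤ))} := by
  have hU' : IsUlamSeq (e 0 1) (e 1 0) U := hU
  ext z
  obtain ⟨a, b, rfl⟩ := e_surj z
  simp only [Set.mem_inter_iff, Set.mem_union, Set.mem_singleton_iff, Set.mem_Icc]
  constructor
  · rintro ⟨hz, hlo, hhi⟩
    have hlo' : (0:ℤ) < a ∨ ((0:ℤ) = a ∧ 1 ≤ b) := e_le.mp hlo
    have hhi' : a < 5 ∨ (a = 5 ∧ b ≤ 1) := e_le.mp hhi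
    rcases (by omega : a = 0 ∨ a = 1 ∨ a = 2 ∨ a = 3 ∨ a = 4 ∨ a = 5) with
      rfl | rfl | rfl | rfl | rfl | rfl
    · have hb := mem0_char hU' hz
      exact Or.inl (Or.inl (Or.inl (Or.inl (Or.inl (e_inj.mpr ⟨rfl, hb⟩)))))
    · have hb := mem1_char hU' hz
      exact Or.inl (Or.inl (Or.inl (Or.inl (Or.inr
        ⟨e_le.mpr (Or.inr ⟨rfl, hb⟩), e_le.mpr (Or.inl one_lt_two)⟩))))
    · rcases mem2_char hU' hz with hb | hb
      · exact Or.inl (Or.inl (Or.inl (Or.inl (Or.inr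
          ⟨e_le.mpr (Or.inl one_lt_two), e_le.mpr (Or.inr ⟨rfl, hb⟩)⟩))))
      · exact Or.inl (Or.inl (Or.inl (Or.inr (e_inj.mpr ⟨rfl, hb⟩))))
    · exact absurd hz (notmem3U hU' b)
    · rcases mem4_char hU' hz with hb | hb
      · exact Or.inl (Or.inl (Or.inr (e_inj.mpr ⟨rfl, hb⟩)))
      · exact Or.inl (Or.inr ⟨e_le.mpr (Or.inr ⟨rfl, hb⟩), e_le.mpr (Or.inl (by omega))⟩)
    · rcases mem5_char hU' hz (by omega) with hb | hb
      · exact Or.inl (Or.inr ⟨e_le.mpr (Or.inl (by omega)), e_le.mpr (Or.inr ⟨rfl, hb⟩)⟩)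
      · exact Or.inr (e_inj.mpr ⟨rfl, hb⟩)
  · rintro (((((h | ⟨h1, h2⟩) | h) | h) | ⟨h1, h2⟩) | h)
    · obtain ⟨rfl, rfl⟩ := e_inj.mp h
      exact ⟨mem_one hU', le_refl _, e_le.mpr (Or.inl (by omega))⟩
    · have h1' := e_le.mp h1
      have h2' := e_le.mp h2
      rcases (by omega : (a = 1 ∧ 0 ≤ b) ∨ (a = 2 ∧ b ≤ 0)) with ⟨rfl, hb⟩ | ⟨rfl, hb⟩
      · exact ⟨mem_level1 hU' b hb, e_le.mpr (Or.inl (by omega)), e_le.mpr (Or.inl (by omega))⟩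
      · exact ⟨mem_level2 hU' b hb, e_le.mpr (Or.inl (by omega)), e_le.mpr (Or.inl (by omega))⟩
    · obtain ⟨rfl, rfl⟩ := e_inj.mp h
      exact ⟨mem22 hU', e_le.mpr (Or.inl (by omega)), e_le.mpr (Or.inl (by omega))⟩
    · obtain ⟨rfl, rfl⟩ := e_inj.mp h
      exact ⟨mem40 hU', e_le.mpr (Or.inl (by omega)), e_le.mpr (Or.inl (by omega))⟩
    · have h1' := e_le.mp h1
      have h2' := e_le.mp h2
      rcases (by omega : (a = 4 ∧ 2 ≤ b) ∨ (a = 5 ∧ b ≤ -1)) with ⟨rfl, hb⟩ | ⟨rfl, hb⟩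
      · exact ⟨mem_level4 hU' b hb, e_le.mpr (Or.inl (by omega)), e_le.mpr (Or.inl (by omega))⟩
      · exact ⟨mem_level5 hU' b hb, e_le.mpr (Or.inl (by omega)), e_le.mpr (Or.inr ⟨rfl, by omega⟩)⟩
    · obtain ⟨rfl, rfl⟩ := e_inj.mp h
      exact ⟨mem51 hU', e_le.mpr (Or.inl (by omega)), le_refl _⟩
end
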